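/- Let x ∈ U(p), y ∈ U(q) (p×p and q×q complex unitary matrices), and let ψ be a q×p matrix of odd elements of a complexified real Grassmann algebra (so ψ† = conjugate-transpose, entries anticommute). Set A = √(I_p − iψ†ψ), B = √(I_q − iψψ†) via terminating Taylor series. Then the block matrix X with X_{I,I} = xA, X_{I,II} = i x ψ† y, X_{II,I} = ψ, X_{II,II} = By satisfies: (xA)†(xA) + iψ†ψ = I_p; −(xA)†(ixψ†y) + iψ†(By) = 0; and −(ixψ†y)†(ixψ†y) + i(By)†(By) = i I_q. -/

import Mathlib

noncomputable section

open Matrix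

/-- The binomial coefficient `binom(1/2, k)`, the `k`-th Taylor coefficient of
`√(1+x)`, as a complex number. -/
def sqrtCoeffC (k : ℕ) : ℂ :=
  (∏ i ∈ Finset.range k, ((1 : ℂ) / 2 - (i : ℂ))) / (Nat.factorial k)

/-- The conjugate transpose `M† = (M̄)ᵀ` of a matrix over `Λ`, with respect to
a conjugation `c` of `Λ` (an entrywise ring homomorphism, as appropriate for a
complexified real Grassmann algebra). -/
def dagger {Λ : Type*} [Ring Λ] {a b : Type*} (c : Λ →+* Λ)
    (M : Matrix a b Λ) : Matrix b a Λ :=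
  (M.map c)ᵀ

/-!
The entries of `ψ` and of its conjugate lie in the span `O` of the `2pq` anticommuting real
generators. Since `O` is a quotient of its own exterior algebra, products of more than `2pq`
elements of `O` vanish; hence `D = -iψ†ψ` and `E = -iψψ†` satisfy `D ^ (pq+1) = 0 = E ^ (pq+1)`,
their entries are products of two odd elements and so commute, and `D† = D`, `E† = E`.
The truncated binomial series therefore give `A² = 1 + D`, `B² = 1 + E`, `A† = A`, `B† = B`,
and `D ψ† = ψ† E` gives `A ψ† = ψ† B`. The three relations then follow from `x†x = 1` and
`y†y = 1` by direct computation.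
-/

open Polynomial Finset

section SqrtCoefficients

lemma sqrtCoeffC_eq_choose (k : ℕ) : sqrtCoeffC k = Ring.choose (1 / 2 : ℂ) k := by
  rw [Ring.choose_eq_smul, sqrtCoeffC, smul_eq_mul, div_eq_inv_mul,
    ← eval₂_smulOneHom_eq_smeval, ← eval_map, descPochhammer_map,
    descPochhammer_eval_eq_prod_range]

lemma conj_sqrtCoeffC (k : ℕ) : starRingEnd ℂ (sqrtCoeffC k) = sqrtCoeffC k := by
  simp [sqrtCoeffC, map_prod, map_ofNat]

lemma sum_antidiagonal_sqrtCoeffC (d : ℕ) :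
    ∑ ij ∈ antidiagonal d, sqrtCoeffC ij.1 * sqrtCoeffC ij.2 = Nat.choose 1 d := by
  simp only [sqrtCoeffC_eq_choose, ← Ring.add_choose_eq d (Commute.refl (1 / 2 : ℂ))]
  norm_num [← Ring.choose_natCast]

def sqrtPoly (K : ℕ) : ℂ[X] := ∑ k ∈ range (K + 1), C (sqrtCoeffC k) * X ^ k

lemma coeff_sqrtPoly_of_le {K i : ℕ} (hi : i ≤ K) : (sqrtPoly K).coeff i = sqrtCoeffC i := by
  simp [sqrtPoly, coeff_C_mul, coeff_X_pow, Nat.lt_succ_iff.mpr hi]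

lemma X_pow_dvd_sqrtPoly_sq_sub (K : ℕ) : X ^ (K + 1) ∣ sqrtPoly K ^ 2 - (X + 1) := by
  rw [X_pow_dvd_iff]
  intro d hd
  rw [coeff_sub, sq, coeff_mul, ← pow_one (X + 1 : ℂ[X]), coeff_X_add_one_pow,
    ← sum_antidiagonal_sqrtCoeffC, sub_eq_zero]
  refine sum_congr rfl fun ij hij => ?_
  rw [HasAntidiagonal.mem_antidiagonal] at hij
  rw [coeff_sqrtPoly_of_le (by omega), coeff_sqrtPoly_of_le (by omega)]

end SqrtCoefficients

section TruncSqrt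
variable {R : Type*} [Ring R] [Algebra ℂ R]

def truncSqrt (K : ℕ) (a : R) : R := ∑ k ∈ range (K + 1), sqrtCoeffC k • a ^ k

lemma aeval_sqrtPoly (K : ℕ) (a : R) : aeval a (sqrtPoly K) = truncSqrt K a := by
  simp [sqrtPoly, truncSqrt, Algebra.smul_def]

lemma truncSqrt_mul_self {K : ℕ} {a : R} (ha : a ^ (K + 1) = 0) :
    truncSqrt K a * truncSqrt K a = 1 + a := by
  obtain ⟨Q, hQ⟩ := X_pow_dvd_sqrtPoly_sq_sub K
  have h := congrArg (aeval a) (sub_eq_iff_eq_add.mp hQ)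
  simp only [map_pow, map_add, map_mul, aeval_X, map_one, aeval_sqrtPoly, ha, zero_mul,
    zero_add] at h
  rw [← sq, h, add_comm]

end TruncSqrt

lemma Matrix.truncSqrt_mul_eq_mul_truncSqrt {Λ : Type*} [Ring Λ] [Algebra ℂ Λ]
    {m n : Type*} [Fintype m] [Fintype n] [DecidableEq m] [DecidableEq n]
    {D : Matrix m m Λ} {E : Matrix n n Λ} {Y : Matrix m n Λ}
    (h : D * Y = Y * E) (K : ℕ) : truncSqrt K D * Y = Y * truncSqrt K E := by
  have hpow : ∀ k : ℕ, D ^ k * Y = Y * E ^ k := by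
    intro k
    induction k with
    | zero => simp
    | succ k ih =>
      rw [pow_succ, pow_succ, Matrix.mul_assoc, h, ← Matrix.mul_assoc, ih, Matrix.mul_assoc]
  simp only [truncSqrt, Matrix.sum_mul, Matrix.mul_sum, Matrix.smul_mul, Matrix.mul_smul, hpow]

section Anticommuting
variable {Λ : Type*} [Ring Λ] [Algebra ℂ Λ]

lemma mul_eq_neg_mul_of_mem_span {ι : Type*} {g : ι → Λ}
    (hg : ∀ i j, g i * g j = -(g j * g i)) {u v : Λ}
    (hu : u ∈ Submodule.span ℂ (Set.range g)) (hv : v ∈ Submodule.span ℂ (Set.range g)) :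
    u * v = -(v * u) := by
  induction hu using Submodule.span_induction with
  | mem a ha =>
    obtain ⟨i, rfl⟩ := ha
    induction hv using Submodule.span_induction with
    | mem b hb => obtain ⟨j, rfl⟩ := hb; exact hg i j
    | zero => simp
    | add b b' _ _ h h' => rw [mul_add, h, h', add_mul, neg_add]
    | smul r b _ h => rw [mul_smul_comm, h, smul_mul_assoc, smul_neg]
  | zero => simp
  | add a a' _ _ h h' => rw [add_mul, h, h', mul_add, neg_add]
  | smul r a _ h => rw [smul_mul_assoc, h, mul_smul_comm, smul_neg]

variable {O : Submodule ℂ Λ}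

lemma mul_self_eq_zero_of_mem (hO : ∀ u ∈ O, ∀ v ∈ O, u * v = -(v * u)) {u : Λ}
    (hu : u ∈ O) : u * u = 0 := by
  have h : (2 : ℂ) • (u * u) = 0 := by
    rw [two_smul]
    nth_rewrite 1 [hO u hu u hu]
    exact neg_add_cancel _
  simpa using h

/-- The inclusion of `O` extends to the exterior algebra of `O`, whose degree-`n` part vanishes
for `n > dim O`. -/
lemma pow_eq_bot_of_finrank_lt (hO : ∀ u ∈ O, ∀ v ∈ O, u * v = -(v * u))
    [FiniteDimensional ℂ O] {n : ℕ} (hn : Module.finrank ℂ O < n) : O ^ n = ⊥ := by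
  let F := ExteriorAlgebra.lift ℂ ⟨O.subtype, fun u => mul_self_eq_zero_of_mem hO u.2⟩
  have hmap : (LinearMap.range (ExteriorAlgebra.ι ℂ (M := O))).map F.toLinearMap = O := by
    rw [← LinearMap.range_comp]
    ext u
    simp [F]
  have hbot : ⋀[ℂ]^n O = ⊥ := by
    rw [← Submodule.finrank_eq_zero, exteriorPower.finrank_eq, Nat.choose_eq_zero_of_lt hn]
  rw [← hmap, ← Submodule.map_pow, ← ExteriorAlgebra.exteriorPower, hbot, Submodule.map_bot]

lemma commute_of_mem_sq (hO : ∀ u ∈ O, ∀ v ∈ O, u * v = -(v * u)) {u v : Λ}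
    (hu : u ∈ O ^ 2) (hv : v ∈ O ^ 2) : Commute u v := by
  rw [pow_two] at hu hv
  induction hu using Submodule.mul_induction_on' with
  | mem_mul_mem a ha b hb =>
    induction hv using Submodule.mul_induction_on' with
    | mem_mul_mem e he f hf =>
      calc a * b * (e * f) = a * (b * e) * f := by noncomm_ring
        _ = -(a * e * (b * f)) := by rw [hO b hb e he]; noncomm_ring
        _ = e * (a * (b * f)) := by rw [hO a ha e he]; noncomm_ring
        _ = -(e * (a * f) * b) := by rw [hO b hb f hf]; noncomm_ring
        _ = e * f * (a * b) := by rw [hO a ha f hf]; noncomm_ring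
    | add v w _ _ hv hw => exact hv.add_right hw
  | add u w _ _ hu hw => exact hu.add_left hw

end Anticommuting

section EntriesInSubmodule
variable {Λ : Type*} [Ring Λ] [Algebra ℂ Λ] {l m n : Type*} [Fintype m]

lemma Matrix.mul_apply_mem_mul {S T : Submodule ℂ Λ} {P : Matrix l m Λ} {Q : Matrix m n Λ}
    (hP : ∀ i j, P i j ∈ S) (hQ : ∀ i j, Q i j ∈ T) (i : l) (j : n) : (P * Q) i j ∈ S * T :=
  Submodule.sum_mem _ fun k _ => Submodule.mul_mem_mul (hP i k) (hQ k j)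

variable [DecidableEq m]

lemma Matrix.pow_apply_mem_pow {S : Submodule ℂ Λ} {D : Matrix m m Λ} (hD : ∀ i j, D i j ∈ S)
    (k : ℕ) : ∀ i j, (D ^ k) i j ∈ S ^ k := by
  induction k with
  | zero =>
    intro i j
    rw [pow_zero, pow_zero, Matrix.one_apply]
    split_ifs
    · exact Submodule.one_le.mp le_rfl
    · exact Submodule.zero_mem _
  | succ k ih => rw [pow_succ, pow_succ]; exact Matrix.mul_apply_mem_mul ih hD

lemma Matrix.pow_eq_zero_of_apply_mem {S : Submodule ℂ Λ} {D : Matrix m m Λ}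
    (hD : ∀ i j, D i j ∈ S) {k : ℕ} (hS : S ^ k = ⊥) : D ^ k = 0 := by
  ext i j
  simpa [hS] using Matrix.pow_apply_mem_pow hD k i j

end EntriesInSubmodule

lemma Matrix.commute_pow_apply {R n : Type*} [Semiring R] [Fintype n] [DecidableEq n]
    {D : Matrix n n R} (hD : ∀ a b a' b', Commute (D a b) (D a' b')) (k : ℕ) (a b a' b' : n) :
    Commute ((D ^ k) a b) (D a' b') := by
  induction k generalizing b with
  | zero => by_cases h : a = b <;> simp [h]
  | succ k ih =>
    rw [pow_succ, Matrix.mul_apply]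
    exact Commute.sum_left _ _ _ fun j _ => (ih j).mul_left (hD j b a' b')

section Dagger
variable {Λ : Type*} [Ring Λ] (c : Λ →+* Λ) {l m n : Type*}

lemma dagger_apply (M : Matrix m n Λ) (i : n) (j : m) : dagger c M i j = c (M j i) := rfl

lemma dagger_dagger (hc_inv : ∀ a : Λ, c (c a) = a) (M : Matrix m n Λ) :
    dagger c (dagger c M) = M := by
  ext i j
  simp [dagger_apply, hc_inv]

lemma dagger_neg (M : Matrix m n Λ) : dagger c (-M) = -dagger c M := by
  ext i j
  simp [dagger_apply]

lemma dagger_sum {κ : Type*} (s : Finset κ) (M : κ → Matrix m n Λ) :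
    dagger c (∑ k ∈ s, M k) = ∑ k ∈ s, dagger c (M k) := by
  ext i j
  simp [dagger_apply, Matrix.sum_apply]

lemma dagger_one [DecidableEq n] : dagger c (1 : Matrix n n Λ) = 1 := by
  ext i j
  simp [dagger, Matrix.one_apply, eq_comm]

lemma dagger_mul_of_commute [Fintype m] {M : Matrix l m Λ} {N : Matrix m n Λ}
    (h : ∀ i j k l, Commute (c (M i j)) (c (N k l))) :
    dagger c (M * N) = dagger c N * dagger c M := by
  ext i j
  simp only [dagger_apply, Matrix.mul_apply, map_sum, map_mul]
  exact sum_congr rfl fun k _ => (h j k k i).eq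

lemma dagger_mul_of_anticommute [Fintype m] {M : Matrix l m Λ} {N : Matrix m n Λ}
    (h : ∀ i j k l, c (M i j) * c (N k l) = -(c (N k l) * c (M i j))) :
    dagger c (M * N) = -(dagger c N * dagger c M) := by
  ext i j
  simp only [dagger_apply, Matrix.neg_apply, Matrix.mul_apply, map_sum, map_mul,
    ← sum_neg_distrib]
  exact sum_congr rfl fun k _ => h j k k i

lemma dagger_pow_of_commute [Fintype n] [DecidableEq n] {D : Matrix n n Λ}
    (hD : dagger c D = D) (hcomm : ∀ a b a' b', Commute (D a b) (D a' b')) (k : ℕ) :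
    dagger c (D ^ k) = D ^ k := by
  have hc_apply : ∀ {k : ℕ}, dagger c (D ^ k) = D ^ k → ∀ a b, c ((D ^ k) a b) = (D ^ k) b a :=
    fun h a b => congrFun (congrFun h b) a
  induction k with
  | zero => exact dagger_one c
  | succ k ih =>
    rw [pow_succ, dagger_mul_of_commute c fun i j k' l => ?_, ih, hD, ← pow_succ, pow_succ']
    rw [hc_apply ih, ← pow_one D, hc_apply (by rwa [pow_one]), pow_one]
    exact Matrix.commute_pow_apply hcomm k j i l k'

variable [Algebra ℂ Λ]

lemma map_smul_of_conj
    (hc_alg : ∀ z : ℂ, c (algebraMap ℂ Λ z) = algebraMap ℂ Λ (starRingEnd ℂ z))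
    (z : ℂ) (a : Λ) : c (z • a) = starRingEnd ℂ z • c a := by
  rw [Algebra.smul_def, map_mul, hc_alg, ← Algebra.smul_def]

lemma dagger_smul (hc_alg : ∀ z : ℂ, c (algebraMap ℂ Λ z) = algebraMap ℂ Λ (starRingEnd ℂ z))
    (z : ℂ) (M : Matrix m n Λ) : dagger c (z • M) = starRingEnd ℂ z • dagger c M := by
  ext i j
  simp [dagger_apply, map_smul_of_conj c hc_alg]

lemma dagger_truncSqrt
    (hc_alg : ∀ z : ℂ, c (algebraMap ℂ Λ z) = algebraMap ℂ Λ (starRingEnd ℂ z))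
    [Fintype n] [DecidableEq n] {D : Matrix n n Λ} (hD : dagger c D = D)
    (hcomm : ∀ a b a' b', Commute (D a b) (D a' b')) (K : ℕ) :
    dagger c (truncSqrt K D) = truncSqrt K D := by
  simp only [truncSqrt, dagger_sum, dagger_smul c hc_alg, conj_sqrtCoeffC,
    dagger_pow_of_commute c hD hcomm]

lemma dagger_map_algebraMap
    (hc_alg : ∀ z : ℂ, c (algebraMap ℂ Λ z) = algebraMap ℂ Λ (starRingEnd ℂ z))
    (x : Matrix m n ℂ) : dagger c (x.map (algebraMap ℂ Λ)) = xᴴ.map (algebraMap ℂ Λ) := by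
  ext i j
  simp [dagger_apply, hc_alg]

variable [Fintype m]

lemma dagger_algebraMap_mul
    (hc_alg : ∀ z : ℂ, c (algebraMap ℂ Λ z) = algebraMap ℂ Λ (starRingEnd ℂ z))
    (x : Matrix l m ℂ) (M : Matrix m n Λ) :
    dagger c (x.map (algebraMap ℂ Λ) * M) = dagger c M * xᴴ.map (algebraMap ℂ Λ) := by
  rw [dagger_mul_of_commute c fun i j k l => ?_, dagger_map_algebraMap c hc_alg]
  simp only [Matrix.map_apply, hc_alg]
  exact Algebra.commutes _ _

lemma dagger_mul_algebraMap
    (hc_alg : ∀ z : ℂ, c (algebraMap ℂ Λ z) = algebraMap ℂ Λ (starRingEnd ℂ z))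
    (M : Matrix l m Λ) (x : Matrix m n ℂ) :
    dagger c (M * x.map (algebraMap ℂ Λ)) = xᴴ.map (algebraMap ℂ Λ) * dagger c M := by
  rw [dagger_mul_of_commute c fun i j k l => ?_, dagger_map_algebraMap c hc_alg]
  simp only [Matrix.map_apply, hc_alg]
  exact (Algebra.commutes _ _).symm

lemma dagger_mul_algebraMap_mul_mul_algebraMap
    (hc_alg : ∀ z : ℂ, c (algebraMap ℂ Λ z) = algebraMap ℂ Λ (starRingEnd ℂ z))
    [Fintype l] (M N : Matrix l m Λ) (y : Matrix m n ℂ) :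
    dagger c (M * y.map (algebraMap ℂ Λ)) * (N * y.map (algebraMap ℂ Λ))
      = yᴴ.map (algebraMap ℂ Λ) * (dagger c M * N) * y.map (algebraMap ℂ Λ) := by
  rw [dagger_mul_algebraMap c hc_alg, Matrix.mul_assoc, Matrix.mul_assoc, Matrix.mul_assoc]

variable [DecidableEq m]

lemma map_conjTranspose_mul_map_algebraMap {x : Matrix m m ℂ} (hx : xᴴ * x = 1) :
    xᴴ.map (algebraMap ℂ Λ) * x.map (algebraMap ℂ Λ) = 1 := by
  rw [← Matrix.map_mul, hx, Matrix.map_one _ (map_zero _) (map_one _)]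

lemma dagger_algebraMap_mul_mul_algebraMap_mul
    (hc_alg : ∀ z : ℂ, c (algebraMap ℂ Λ z) = algebraMap ℂ Λ (starRingEnd ℂ z))
    {x : Matrix m m ℂ} (hx : xᴴ * x = 1) (M : Matrix m l Λ) (N : Matrix m n Λ) :
    dagger c (x.map (algebraMap ℂ Λ) * M) * (x.map (algebraMap ℂ Λ) * N) = dagger c M * N := by
  rw [dagger_algebraMap_mul c hc_alg, Matrix.mul_assoc, ← Matrix.mul_assoc _ _ N,
    map_conjTranspose_mul_map_algebraMap hx, Matrix.one_mul]

end Dagger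

section OddMatrix
variable {Λ : Type*} [Ring Λ] [Algebra ℂ Λ] (c : Λ →+* Λ) {m n : Type*}

/-- `O` plays the role of the odd part of the Grassmann algebra. -/
def IsOddMatrix (O : Submodule ℂ Λ) (ψ : Matrix m n Λ) : Prop :=
  ∀ i j, ψ i j ∈ O ∧ c (ψ i j) ∈ O

variable {c} {O : Submodule ℂ Λ} {ψ : Matrix m n Λ}

lemma IsOddMatrix.dagger (hc_inv : ∀ a : Λ, c (c a) = a) (hψ : IsOddMatrix c O ψ) :
    IsOddMatrix c O (dagger c ψ) := fun i j => by
  rw [dagger_apply, hc_inv]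
  exact (hψ j i).symm

lemma exists_isOddMatrix [Fintype m] [Fintype n]
    (hc_alg : ∀ z : ℂ, c (algebraMap ℂ Λ z) = algebraMap ℂ Λ (starRingEnd ℂ z))
    (ψ1 ψ2 : Matrix m n Λ) (hreal1 : ∀ a b, c (ψ1 a b) = ψ1 a b)
    (hreal2 : ∀ a b, c (ψ2 a b) = ψ2 a b)
    (hodd : ∀ u v : Λ,
      u ∈ Set.range (fun ab : m × n => ψ1 ab.1 ab.2) ∪ Set.range (fun ab : m × n => ψ2 ab.1 ab.2) →
      v ∈ Set.range (fun ab : m × n => ψ1 ab.1 ab.2) ∪ Set.range (fun ab : m × n => ψ2 ab.1 ab.2) →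
      u * v = -(v * u)) :
    ∃ O : Submodule ℂ Λ, (∀ u ∈ O, ∀ v ∈ O, u * v = -(v * u)) ∧
      IsOddMatrix c O (ψ1 + Complex.I • ψ2) ∧
      ∀ k, 2 * (Fintype.card m * Fintype.card n) < k → O ^ k = ⊥ := by
  set g := Sum.elim (fun ab : m × n => ψ1 ab.1 ab.2) (fun ab : m × n => ψ2 ab.1 ab.2)
  have hg : ∀ i j, g i * g j = -(g j * g i) := fun i j =>
    hodd _ _ (by rw [← Set.Sum.elim_range]; exact ⟨i, rfl⟩)
      (by rw [← Set.Sum.elim_range]; exact ⟨j, rfl⟩)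
  set O := Submodule.span ℂ (Set.range g)
  have hO : ∀ u ∈ O, ∀ v ∈ O, u * v = -(v * u) :=
    fun u hu v hv => mul_eq_neg_mul_of_mem_span hg hu hv
  have hmem : ∀ (z : ℂ) i j, ψ1 i j + z • ψ2 i j ∈ O := fun z i j =>
    O.add_mem (Submodule.subset_span ⟨.inl (i, j), rfl⟩)
      (O.smul_mem _ (Submodule.subset_span ⟨.inr (i, j), rfl⟩))
  refine ⟨O, hO, fun i j => ⟨hmem _ i j, ?_⟩, fun k hk => ?_⟩
  · rw [Matrix.add_apply, Matrix.smul_apply, map_add, map_smul_of_conj c hc_alg, hreal1,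
      hreal2]
    exact hmem _ i j
  · have : FiniteDimensional ℂ O := FiniteDimensional.span_of_finite ℂ (Set.finite_range g)
    refine pow_eq_bot_of_finrank_lt hO ((finrank_range_le_card g).trans_lt ?_)
    simpa [two_mul] using hk

variable [Fintype m]

lemma neg_I_smul_dagger_mul_self_apply_mem_sq (hψ : IsOddMatrix c O ψ) (i j : n) :
    (-(Complex.I • (dagger c ψ * ψ))) i j ∈ O ^ 2 := by
  rw [pow_two]
  exact Submodule.neg_mem _ (Submodule.smul_mem _ _
    (Matrix.mul_apply_mem_mul (fun i j => (hψ j i).2) (fun i j => (hψ i j).1) i j))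

lemma dagger_neg_I_smul_dagger_mul_self (hO : ∀ u ∈ O, ∀ v ∈ O, u * v = -(v * u))
    (hc_inv : ∀ a : Λ, c (c a) = a)
    (hc_alg : ∀ z : ℂ, c (algebraMap ℂ Λ z) = algebraMap ℂ Λ (starRingEnd ℂ z))
    (hψ : IsOddMatrix c O ψ) :
    dagger c (-(Complex.I • (dagger c ψ * ψ))) = -(Complex.I • (dagger c ψ * ψ)) := by
  have hanti : dagger c (dagger c ψ * ψ) = -(dagger c ψ * ψ) := by
    rw [dagger_mul_of_anticommute c fun i j k l => ?_, dagger_dagger c hc_inv]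
    rw [dagger_apply, hc_inv]
    exact hO _ (hψ j i).1 _ (hψ k l).2
  rw [dagger_neg, dagger_smul c hc_alg, hanti, Complex.conj_I, smul_neg, neg_smul, neg_neg]

variable [Fintype n] [DecidableEq n]

lemma truncSqrt_neg_I_smul_dagger_mul_self_mul_self {K : ℕ} (hψ : IsOddMatrix c O ψ)
    (hnil : O ^ (2 * (K + 1)) = ⊥) :
    truncSqrt K (-(Complex.I • (dagger c ψ * ψ))) * truncSqrt K (-(Complex.I • (dagger c ψ * ψ)))
      = 1 + -(Complex.I • (dagger c ψ * ψ)) := by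
  refine truncSqrt_mul_self (Matrix.pow_eq_zero_of_apply_mem
    (neg_I_smul_dagger_mul_self_apply_mem_sq hψ) ?_)
  rw [← pow_mul, hnil]

lemma dagger_truncSqrt_neg_I_smul_dagger_mul_self (hO : ∀ u ∈ O, ∀ v ∈ O, u * v = -(v * u))
    (hc_inv : ∀ a : Λ, c (c a) = a)
    (hc_alg : ∀ z : ℂ, c (algebraMap ℂ Λ z) = algebraMap ℂ Λ (starRingEnd ℂ z))
    (hψ : IsOddMatrix c O ψ) (K : ℕ) :
    dagger c (truncSqrt K (-(Complex.I • (dagger c ψ * ψ))))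
      = truncSqrt K (-(Complex.I • (dagger c ψ * ψ))) :=
  dagger_truncSqrt c hc_alg (dagger_neg_I_smul_dagger_mul_self hO hc_inv hc_alg hψ)
    (fun _ _ _ _ => commute_of_mem_sq hO (neg_I_smul_dagger_mul_self_apply_mem_sq hψ _ _)
      (neg_I_smul_dagger_mul_self_apply_mem_sq hψ _ _)) K

end OddMatrix

section Relations
variable {Λ : Type*} [Ring Λ] [Algebra ℂ Λ] (c : Λ →+* Λ)
  {m n : Type*} [Fintype m] [DecidableEq m] [Fintype n]
  {x : Matrix m m ℂ} {y : Matrix n n ℂ}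

lemma superunitary_block₁₁
    (hc_alg : ∀ z : ℂ, c (algebraMap ℂ Λ z) = algebraMap ℂ Λ (starRingEnd ℂ z))
    (hx : xᴴ * x = 1) {A M : Matrix m m Λ} (hA : dagger c A = A)
    (hAA : A * A = 1 + -(Complex.I • M)) :
    dagger c (x.map (algebraMap ℂ Λ) * A) * (x.map (algebraMap ℂ Λ) * A) + Complex.I • M = 1 := by
  rw [dagger_algebraMap_mul_mul_algebraMap_mul c hc_alg hx, hA, hAA, neg_add_cancel_right]

lemma superunitary_block₁₂
    (hc_alg : ∀ z : ℂ, c (algebraMap ℂ Λ z) = algebraMap ℂ Λ (starRingEnd ℂ z))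
    (hx : xᴴ * x = 1) {A : Matrix m m Λ} {B : Matrix n n Λ}
    {Φ : Matrix m n Λ} (hA : dagger c A = A) (hAΦ : A * Φ = Φ * B) :
    -(dagger c (x.map (algebraMap ℂ Λ) * A)
        * (Complex.I • (x.map (algebraMap ℂ Λ) * Φ * y.map (algebraMap ℂ Λ))))
      + Complex.I • (Φ * (B * y.map (algebraMap ℂ Λ))) = 0 := by
  rw [Matrix.mul_assoc _ Φ, Matrix.mul_smul,
    dagger_algebraMap_mul_mul_algebraMap_mul c hc_alg hx, hA, ← Matrix.mul_assoc, hAΦ,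
    Matrix.mul_assoc, neg_add_cancel]

lemma superunitary_block₂₂ [DecidableEq n]
    (hc_alg : ∀ z : ℂ, c (algebraMap ℂ Λ z) = algebraMap ℂ Λ (starRingEnd ℂ z))
    (hc_inv : ∀ a : Λ, c (c a) = a) (hx : xᴴ * x = 1)
    (hy : yᴴ * y = 1) {B : Matrix n n Λ} {ψ : Matrix n m Λ} (hB : dagger c B = B)
    (hBB : B * B = 1 + -(Complex.I • (ψ * dagger c ψ))) :
    -(dagger c (Complex.I • (x.map (algebraMap ℂ Λ) * dagger c ψ * y.map (algebraMap ℂ Λ)))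
        * (Complex.I • (x.map (algebraMap ℂ Λ) * dagger c ψ * y.map (algebraMap ℂ Λ))))
      + Complex.I • (dagger c (B * y.map (algebraMap ℂ Λ)) * (B * y.map (algebraMap ℂ Λ)))
      = Complex.I • (1 : Matrix n n Λ) := by
  rw [dagger_smul c hc_alg, Complex.conj_I, Matrix.smul_mul, Matrix.mul_smul, smul_smul,
    neg_mul, Complex.I_mul_I, neg_neg, one_smul,
    dagger_mul_algebraMap_mul_mul_algebraMap c hc_alg,
    dagger_algebraMap_mul_mul_algebraMap_mul c hc_alg hx, dagger_dagger c hc_inv,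
    dagger_mul_algebraMap_mul_mul_algebraMap c hc_alg, hB, hBB, Matrix.mul_add, Matrix.add_mul,
    Matrix.mul_one, map_conjTranspose_mul_map_algebraMap hy]
  simp only [Matrix.mul_neg, Matrix.neg_mul, Matrix.mul_smul, Matrix.smul_mul, smul_add,
    smul_neg, smul_smul, Complex.I_mul_I, neg_smul, one_smul, neg_neg]
  abel

end Relations

/-- with `x ∈ U(p)`, `y ∈ U(q)`, `ψ = ψ¹ + iψ²` a `q × p` matrix
of odd elements of a complexified real Grassmann algebra, and
`A = √(I_p − iψ†ψ)`, `B = √(I_q − iψψ†)` given by terminating Taylor series,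
the block matrix with blocks `xA, ixψ†y, ψ, By` satisfies the three defining
relations of `U(p|q)`. -/
theorem u_pq_embedding_relations (p q : ℕ) (Λ : Type*) [Ring Λ] [Algebra ℂ Λ]
    (c : Λ →+* Λ)
    (hc_inv : ∀ a : Λ, c (c a) = a)
    (hc_alg : ∀ z : ℂ, c (algebraMap ℂ Λ z) = algebraMap ℂ Λ (starRingEnd ℂ z))
    (ψ1 ψ2 : Matrix (Fin q) (Fin p) Λ)
    (hreal1 : ∀ a b, c (ψ1 a b) = ψ1 a b)
    (hreal2 : ∀ a b, c (ψ2 a b) = ψ2 a b)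
    (hodd : ∀ u v : Λ,
      u ∈ Set.range (fun ab : Fin q × Fin p => ψ1 ab.1 ab.2) ∪
          Set.range (fun ab : Fin q × Fin p => ψ2 ab.1 ab.2) →
      v ∈ Set.range (fun ab : Fin q × Fin p => ψ1 ab.1 ab.2) ∪
          Set.range (fun ab : Fin q × Fin p => ψ2 ab.1 ab.2) →
      u * v = -(v * u))
    (x : Matrix (Fin p) (Fin p) ℂ) (hx : xᴴ * x = 1)
    (y : Matrix (Fin q) (Fin q) ℂ) (hy : yᴴ * y = 1) :
    ∀ (ψ : Matrix (Fin q) (Fin p) Λ), ψ = ψ1 + Complex.I • ψ2 →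
    ∀ A, A = ∑ k ∈ Finset.range (p * q + 1),
          sqrtCoeffC k • (-(Complex.I • (dagger c ψ * ψ))) ^ k →
    ∀ B, B = ∑ k ∈ Finset.range (p * q + 1),
          sqrtCoeffC k • (-(Complex.I • (ψ * dagger c ψ))) ^ k →
    ∀ xΛ, xΛ = x.map (algebraMap ℂ Λ) →
    ∀ yΛ, yΛ = y.map (algebraMap ℂ Λ) →
      (dagger c (xΛ * A) * (xΛ * A) + Complex.I • (dagger c ψ * ψ) = 1)
      ∧ (-(dagger c (xΛ * A) * (Complex.I • (xΛ * dagger c ψ * yΛ)))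
          + Complex.I • (dagger c ψ * (B * yΛ)) = 0)
      ∧ (-(dagger c (Complex.I • (xΛ * dagger c ψ * yΛ))
            * (Complex.I • (xΛ * dagger c ψ * yΛ)))
          + Complex.I • (dagger c (B * yΛ) * (B * yΛ))
        = Complex.I • (1 : Matrix (Fin q) (Fin q) Λ)) := by
  intro ψ hψ A hA B hB xΛ hxΛ yΛ hyΛ
  subst hxΛ hyΛ
  obtain ⟨O, hO, hψO, hnil⟩ := exists_isOddMatrix hc_alg ψ1 ψ2 hreal1 hreal2 hodd
  rw [← hψ] at hψO
  replace hnil : O ^ (2 * (p * q + 1)) = ⊥ := hnil _ (by simp [mul_comm q p])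
  have hψdO := hψO.dagger hc_inv
  replace hA : A = truncSqrt (p * q) (-(Complex.I • (dagger c ψ * ψ))) := hA
  replace hB : B = truncSqrt (p * q) (-(Complex.I • (dagger c (dagger c ψ) * dagger c ψ))) := by
    rw [dagger_dagger c hc_inv]; exact hB
  have hAsa : dagger c A = A := by
    rw [hA]; exact dagger_truncSqrt_neg_I_smul_dagger_mul_self hO hc_inv hc_alg hψO _
  have hBsa : dagger c B = B := by
    rw [hB]; exact dagger_truncSqrt_neg_I_smul_dagger_mul_self hO hc_inv hc_alg hψdO _
  have hAA : A * A = 1 + -(Complex.I • (dagger c ψ * ψ)) := by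
    rw [hA]; exact truncSqrt_neg_I_smul_dagger_mul_self_mul_self hψO hnil
  have hBB : B * B = 1 + -(Complex.I • (ψ * dagger c ψ)) := by
    rw [hB]
    simpa only [dagger_dagger c hc_inv] using
      truncSqrt_neg_I_smul_dagger_mul_self_mul_self hψdO hnil
  have hAψ : A * dagger c ψ = dagger c ψ * B := by
    rw [hA, hB, dagger_dagger c hc_inv]
    exact Matrix.truncSqrt_mul_eq_mul_truncSqrt (by simp [Matrix.mul_assoc]) _
  exact ⟨superunitary_block₁₁ c hc_alg hx hAsa hAA, superunitary_block₁₂ c hc_alg hx hAsa hAψ,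
    superunitary_block₂₂ c hc_alg hc_inv hx hy hBsa hBB⟩
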